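/- arXiv:1209.2570 — 3 statements merged into one kernel-verified Lean document; each statement's English description precedes it below -/
import Mathlib

section
/- There exist C₁ > 0, R₁ ∈ (0,2) and n₀ ∈ ℕ such that, whenever α > 0 is sufficiently small, for all (θ,x) ∈ I: |∂f_k(θ,x)/∂x| ≤ C₁·R₁^k for every k ∈ ℕ, and |∂f_k(θ,x)/∂x| ≤ R₁^k ≤ d^k/6 for every k ≥ n₀. -/
/-!
Weight the fibre coordinate by `w(x) = b - x²` with `b > β²`. Because `f` maps `[-β, β]` into
`(-β, β)`, i.e. `|β² - a| < β`, one can choose `b` so that `f'(x)² w(x) < 4 w(f(x))` on `[-β, β]`,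
with a uniform gap. The gap survives the forcing `αφ` for small `α`, giving
`f'(x)² w(x) ≤ ρ w(f(x) + αφ)` with `ρ < 4`. Telescoping along an orbit yields
`(∂f_k/∂x)² w(x₀) ≤ ρ^k w(x_k)`, hence `|∂f_k/∂x| ≤ C √ρ^k`. Any `R₁ ∈ (√ρ, 2)` then absorbs
`C` for large `k`, and `R₁^k ≤ d^k/6` eventually because `R₁ < 2 ≤ d`.
-/

open Set MeasureTheory Filter
open scoped ENNReal

noncomputable section

/-- The quadratic map `f(x) = a - x²`. -/
def qm (a : ℝ) : ℝ → ℝ := fun x => a - x ^ 2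

/-- The critical point `0` of `qm a` is strictly pre-periodic: its forward orbit never
returns to `0` and is eventually periodic. -/
def StrictlyPreperiodic (a : ℝ) : Prop :=
  (∀ i : ℕ, 1 ≤ i → (qm a)^[i] 0 ≠ 0) ∧
    ∃ m p : ℕ, 1 ≤ m ∧ 1 ≤ p ∧ (qm a)^[m + p] 0 = (qm a)^[m] 0

/-- A lift of the Viana skew product `F(θ, x) = (dθ, f(x) + αφ(θ))` to `ℝ × ℝ`;
for `φ` of period `1` this is a lift of the corresponding map of `(ℝ/ℤ) × ℝ`. -/
def Viana (a : ℝ) (d : ℕ) (φ : ℝ → ℝ) (α : ℝ) : ℝ × ℝ → ℝ × ℝ :=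
  fun p => ((d : ℝ) * p.1, qm a p.2 + α * φ p.1)

/-- The fibre maps `f_n`, defined by `F^n(θ, x) = (d^n θ, f_n(θ, x))`. -/
def fn (a : ℝ) (d : ℕ) (φ : ℝ → ℝ) (α : ℝ) (n : ℕ) (θ x : ℝ) : ℝ :=
  ((Viana a d φ α)^[n] (θ, x)).2

lemma iterate_viana_fst (a : ℝ) (d : ℕ) (φ : ℝ → ℝ) (α : ℝ) (n : ℕ) (p : ℝ × ℝ) :
    ((Viana a d φ α)^[n] p).1 = (d : ℝ) ^ n * p.1 := by
  induction n with
  | zero => simp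
  | succ n ih =>
    rw [Function.iterate_succ_apply', pow_succ, mul_comm _ (d : ℝ), mul_assoc, ← ih]
    rfl

lemma fn_succ (a : ℝ) (d : ℕ) (φ : ℝ → ℝ) (α : ℝ) (n : ℕ) (θ x : ℝ) :
    fn a d φ α (n + 1) θ x = qm a (fn a d φ α n θ x) + α * φ ((d : ℝ) ^ n * θ) := by
  rw [fn, Function.iterate_succ_apply', ← iterate_viana_fst a d φ α n (θ, x)]
  rfl

lemma hasDerivAt_qm (a x : ℝ) : HasDerivAt (qm a) (-2 * x) x :=
  ((hasDerivAt_pow 2 x).const_sub a).congr_deriv (by push_cast; ring)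

lemma hasDerivAt_fn (a : ℝ) (d : ℕ) (φ : ℝ → ℝ) (α θ x : ℝ) (k : ℕ) :
    HasDerivAt (fn a d φ α k θ) (∏ i ∈ Finset.range k, -2 * fn a d φ α i θ x) x := by
  induction k with
  | zero => exact hasDerivAt_id x
  | succ k ih =>
    rw [Finset.prod_range_succ, mul_comm,
      show fn a d φ α (k + 1) θ = _ from funext (fn_succ a d φ α k θ)]
    exact ((hasDerivAt_qm a _).comp x ih).add_const _

lemma sq_prod_range_mul_le {g w : ℕ → ℝ} {ρ : ℝ} (hρ : 0 ≤ ρ)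
    (h : ∀ n, g n ^ 2 * w n ≤ ρ * w (n + 1)) (k : ℕ) :
    (∏ i ∈ Finset.range k, g i) ^ 2 * w 0 ≤ ρ ^ k * w k := by
  induction k with
  | zero => simp
  | succ k ih =>
    calc (∏ i ∈ Finset.range (k + 1), g i) ^ 2 * w 0
        = (∏ i ∈ Finset.range k, g i) ^ 2 * w 0 * g k ^ 2 := by
          rw [Finset.prod_range_succ]; ring
      _ ≤ ρ ^ k * w k * g k ^ 2 := mul_le_mul_of_nonneg_right ih (sq_nonneg _)
      _ = ρ ^ k * (g k ^ 2 * w k) := by ring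
      _ ≤ ρ ^ k * (ρ * w (k + 1)) := mul_le_mul_of_nonneg_left (h k) (pow_nonneg hρ k)
      _ = ρ ^ (k + 1) * w (k + 1) := by ring

lemma eventually_mul_pow_le_pow {r₁ r₂ c : ℝ} (hr₁ : 0 ≤ r₁) (h : r₁ < r₂) (hc : 0 < c) :
    ∀ᶠ k in atTop, c * r₁ ^ k ≤ r₂ ^ k := by
  filter_upwards [(isLittleO_pow_pow_of_lt_left hr₁ h).bound (inv_pos.2 hc)] with k hk
  have hr₂ : 0 ≤ r₂ := hr₁.trans h.le
  rw [Real.norm_of_nonneg (by positivity), Real.norm_of_nonneg (by positivity)] at hk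
  rwa [← le_div_iff₀' hc, div_eq_inv_mul]

lemma exists_weight_gap {a β : ℝ} (hβ : 1 < β) (haβ : a < β) (hβa : -β < a - β ^ 2) :
    ∃ b m, β ^ 2 < b ∧ 0 < m ∧
      ∀ x ∈ Icc (-β) β, 4 * x ^ 2 * (b - x ^ 2) + m ≤ 4 * (b - qm a x ^ 2) := by
  have hβ2 : 0 < β ^ 2 - 1 := by nlinarith
  have ha : 0 < a := by nlinarith
  -- `hfeas` is `(β² - a)² < β²`; for `b` in the interval it provides, the gap `g (x²)` below is
  -- affine in `x²` and positive at both ends `x² = 0` and `x² = β²`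
  have hfeas : β ^ 2 * (β ^ 2 - 1) < 2 * a * β ^ 2 - a ^ 2 := by nlinarith
  obtain ⟨b, hβb, hb⟩ := exists_between ((lt_div_iff₀ hβ2).2 hfeas)
  rw [lt_div_iff₀ hβ2] at hb
  set g : ℝ → ℝ := fun u => b - a ^ 2 + (2 * a - b) * u
  have hg : ∀ u ∈ Icc 0 (β ^ 2), min (g 0) (g (β ^ 2)) ≤ g u := by
    rintro u ⟨hu0, huβ⟩
    rcases le_total 0 (2 * a - b) with h | h
    · exact (min_le_left _ _).trans (by simp only [g]; nlinarith)
    · exact (min_le_right _ _).trans (by simp only [g]; nlinarith)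
  refine ⟨b, 4 * min (g 0) (g (β ^ 2)), hβb, ?_, fun x hx => ?_⟩
  · have : 0 < g 0 := by simp only [g]; nlinarith
    have : 0 < g (β ^ 2) := by simp only [g]; nlinarith
    positivity
  · have hx2 := hg (x ^ 2) ⟨sq_nonneg x, sq_le_sq' hx.1 hx.2⟩
    have hid : 4 * (b - qm a x ^ 2) = 4 * x ^ 2 * (b - x ^ 2) + 4 * g (x ^ 2) := by
      simp only [qm, g]; ring
    linarith

lemma exists_weight_step {a β : ℝ} (hβ : 1 < β) (hmap : MapsTo (qm a) (Icc (-β) β) (Ioo (-β) β)) :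
    ∃ b ρ δ, β ^ 2 < b ∧ 0 ≤ ρ ∧ ρ < 4 ∧ 0 < δ ∧ ∀ x ∈ Icc (-β) β, ∀ ε, |ε| ≤ δ →
      qm a x + ε ∈ Icc (-β) β ∧ 4 * x ^ 2 * (b - x ^ 2) ≤ ρ * (b - (qm a x + ε) ^ 2) := by
  have haβ : a < β := by
    simpa [qm] using (hmap (show (0 : ℝ) ∈ Icc (-β) β by constructor <;> linarith)).2
  have hβa : -β < a - β ^ 2 := (hmap (right_mem_Icc.2 (by linarith))).1
  obtain ⟨b, m, hβb, hm, hgap⟩ := exists_weight_gap hβ haβ hβa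
  have hb : 0 < b := by nlinarith
  have hmb : m ≤ 4 * b := by
    have := hgap 0 (by constructor <;> linarith)
    simp only [qm] at this
    nlinarith
  -- `ρ = 4 - m / (2b)` spends half of the gap `m`, using `0 ≤ b - y² ≤ b`
  refine ⟨b, 4 - m / (2 * b), min (min (β - a) (a - β ^ 2 + β)) (m / (16 * β)), hβb, ?_, ?_, ?_,
    fun x hx ε hε => ?_⟩
  · have : m / (2 * b) ≤ 2 := by rw [div_le_iff₀ (by positivity)]; linarith
    linarith
  · have : 0 < m / (2 * b) := by positivity
    linarith
  · have : 0 < m / (16 * β) := by positivity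
    exact lt_min (lt_min (by linarith) (by linarith)) this
  · have hε₁ : |ε| ≤ β - a := hε.trans ((min_le_left _ _).trans (min_le_left _ _))
    have hε₂ : |ε| ≤ a - β ^ 2 + β := hε.trans ((min_le_left _ _).trans (min_le_right _ _))
    have hε₃ : |ε| ≤ m / (16 * β) := hε.trans (min_le_right _ _)
    have hx2 : x ^ 2 ≤ β ^ 2 := sq_le_sq' hx.1 hx.2
    have hq := hmap hx
    set q := qm a x with hq_def
    have hy : q + ε ∈ Icc (-β) β := by
      simp only [hq_def, qm]
      constructor <;> linarith [abs_le.1 (le_refl |ε|), sq_nonneg x]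
    refine ⟨hy, ?_⟩
    have hpert : (q + ε) ^ 2 - q ^ 2 ≤ m / 8 := by
      have hsum : |q + (q + ε)| ≤ 2 * β := by
        rw [abs_le]; constructor <;> linarith [hq.1, hq.2, hy.1, hy.2]
      calc (q + ε) ^ 2 - q ^ 2 = ε * (q + (q + ε)) := by ring
        _ ≤ |ε| * |q + (q + ε)| := by rw [← abs_mul]; exact le_abs_self _
        _ ≤ m / (16 * β) * (2 * β) := by gcongr
        _ = m / 8 := by field_simp; ring
    have hshrink : m / (2 * b) * (b - (q + ε) ^ 2) ≤ m / 2 := by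
      rw [div_mul_eq_mul_div, div_le_div_iff₀ (by positivity) two_pos]
      nlinarith [sq_nonneg (q + ε)]
    nlinarith [hgap x hx]

section Orbit

variable {a β b ρ δ α θ x : ℝ} {d : ℕ} {φ : ℝ → ℝ}

lemma fn_mem_Icc (hinv : ∀ y ∈ Icc (-β) β, ∀ ε, |ε| ≤ δ → qm a y + ε ∈ Icc (-β) β)
    (hforce : ∀ t, |α * φ t| ≤ δ) (hx : x ∈ Icc (-β) β) (k : ℕ) :
    fn a d φ α k θ x ∈ Icc (-β) β := by
  induction k with
  | zero => exact hx
  | succ k ih => rw [fn_succ]; exact hinv _ ih _ (hforce _)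

lemma sq_deriv_fn_mul_le (hρ : 0 ≤ ρ)
    (hinv : ∀ y ∈ Icc (-β) β, ∀ ε, |ε| ≤ δ → qm a y + ε ∈ Icc (-β) β)
    (hstep : ∀ y ∈ Icc (-β) β, ∀ ε, |ε| ≤ δ →
      4 * y ^ 2 * (b - y ^ 2) ≤ ρ * (b - (qm a y + ε) ^ 2))
    (hforce : ∀ t, |α * φ t| ≤ δ) (hx : x ∈ Icc (-β) β) (k : ℕ) :
    deriv (fn a d φ α k θ) x ^ 2 * (b - x ^ 2) ≤ ρ ^ k * (b - fn a d φ α k θ x ^ 2) := by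
  rw [(hasDerivAt_fn a d φ α θ x k).deriv]
  refine sq_prod_range_mul_le (w := fun n => b - fn a d φ α n θ x ^ 2) hρ (fun n => ?_) k
  rw [fn_succ]
  linarith [hstep _ (fn_mem_Icc (d := d) (θ := θ) hinv hforce hx n) _ (hforce ((d : ℝ) ^ n * θ))]

end Orbit

lemma exists_abs_deriv_fn_le {a β : ℝ} (d : ℕ) {φ : ℝ → ℝ} (hβ : 1 < β)
    (hmap : MapsTo (qm a) (Icc (-β) β) (Ioo (-β) β)) (hφ : ∀ t, |φ t| ≤ 1) :
    ∃ C > 0, ∃ R, 0 ≤ R ∧ R < 2 ∧ ∃ α₀ > 0, ∀ α, |α| < α₀ → ∀ θ, ∀ x ∈ Icc (-β) β, ∀ k : ℕ,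
      |deriv (fn a d φ α k θ) x| ≤ C * R ^ k := by
  obtain ⟨b, ρ, δ, hβb, hρ0, hρ4, hδ, hstep⟩ := exists_weight_step hβ hmap
  have hbβ : 0 < b - β ^ 2 := sub_pos.2 hβb
  have hb : 0 < b := (sq_nonneg β).trans_lt hβb
  refine ⟨√(b / (b - β ^ 2)), Real.sqrt_pos.2 (div_pos hb hbβ), √ρ, Real.sqrt_nonneg _,
    (Real.sqrt_lt' two_pos).2 (by linarith), δ, hδ, fun α hα θ x hx k => ?_⟩
  have hforce (t : ℝ) : |α * φ t| ≤ δ := by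
    rw [abs_mul]; nlinarith [hφ t, abs_nonneg α, abs_nonneg (φ t)]
  have hD := sq_deriv_fn_mul_le (d := d) (θ := θ) hρ0 (fun y hy ε hε => (hstep y hy ε hε).1)
    (fun y hy ε hε => (hstep y hy ε hε).2) hforce hx k
  refine abs_le_of_sq_le_sq ?_ (by positivity)
  rw [mul_pow, ← pow_mul, mul_comm k, pow_mul, Real.sq_sqrt hρ0, Real.sq_sqrt (div_pos hb hbβ).le,
    div_mul_eq_mul_div, le_div_iff₀ hbβ]
  calc deriv (fn a d φ α k θ) x ^ 2 * (b - β ^ 2)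
      ≤ deriv (fn a d φ α k θ) x ^ 2 * (b - x ^ 2) :=
        mul_le_mul_of_nonneg_left (by linarith [sq_le_sq' hx.1 hx.2]) (sq_nonneg _)
    _ ≤ ρ ^ k * (b - fn a d φ α k θ x ^ 2) := hD
    _ ≤ b * ρ ^ k := by nlinarith [pow_nonneg hρ0 k, sq_nonneg (fn a d φ α k θ x)]

theorem domination_lemma_general
    (a : ℝ)
    (d : ℕ) (hd : 2 ≤ d)
    (φ : ℝ → ℝ) (hφb : ∀ θ : ℝ, |φ θ| ≤ 1)
    (β : ℝ) (hβ1 : 1 < β)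
    (hβmap : ∀ x ∈ Set.Icc (-β) β, qm a x ∈ Set.Ioo (-β) β)
    :
    ∃ C₁ : ℝ, 0 < C₁ ∧ ∃ R₁ : ℝ, R₁ ∈ Set.Ioo (0 : ℝ) 2 ∧ ∃ n₀ : ℕ,
      ∃ α₀ > 0, ∀ α : ℝ, 0 < α → α < α₀ →
        ∀ θ x : ℝ, x ∈ Set.Icc (-β) β →
          (∀ k : ℕ, |deriv (fun y => fn a d φ α k θ y) x| ≤ C₁ * R₁ ^ k) ∧
          (∀ k : ℕ, n₀ ≤ k →
            |deriv (fun y => fn a d φ α k θ y) x| ≤ R₁ ^ k ∧ R₁ ^ k ≤ (d : ℝ) ^ k / 6) := by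
  obtain ⟨C, hC, R, hR0, hR2, α₀, hα₀, hbound⟩ := exists_abs_deriv_fn_le d hβ1 hβmap hφb
  obtain ⟨R₁, hRR₁, hR₁2⟩ := exists_between hR2
  have hR₁d : R₁ < d := hR₁2.trans_le (by exact_mod_cast hd)
  obtain ⟨n₀, hn₀⟩ := eventually_atTop.1 ((eventually_mul_pow_le_pow hR0 hRR₁ hC).and
    (eventually_mul_pow_le_pow (by linarith) hR₁d (by norm_num : (0 : ℝ) < 6)))
  refine ⟨C, hC, R₁, ⟨by linarith, hR₁2⟩, n₀, α₀, hα₀, fun α hα hαα₀ θ x hx => ?_⟩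
  have hCR := hbound α (by rwa [abs_of_pos hα]) θ x hx
  exact ⟨fun k => (hCR k).trans (by gcongr),
    fun k hk => ⟨(hCR k).trans (hn₀ k hk).1, by linarith [(hn₀ k hk).2]⟩⟩

/-- domination. There are `C₁ > 0`, `R₁ ∈ (0,2)` and `n₀ ∈ ℕ` such that for
`α > 0` small enough and all `(θ,x) ∈ I = 𝕋 × [-β,β]`: `|∂f_k/∂x| ≤ C₁ R₁^k` for all `k`, and
`|∂f_k/∂x| ≤ R₁^k ≤ d^k/6` for `k ≥ n₀`. -/
theorem domination_lemma
    (a : ℝ) (ha : a ∈ Set.Ioo (1 : ℝ) 2) (hpre : StrictlyPreperiodic a)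
    (d : ℕ) (hd : 2 ≤ d)
    (φ : ℝ → ℝ) (hφa : ∀ x : ℝ, AnalyticAt ℝ φ x) (hφp : Function.Periodic φ 1)
    (hφnc : ∃ s t : ℝ, φ s ≠ φ t) (hφb : ∀ θ : ℝ, |φ θ| ≤ 1)
    (β : ℝ) (hβ1 : 1 < β) (hβ2 : β < |(-1 - Real.sqrt (1 + 4 * a)) / 2|)
    (hβmap : ∀ x ∈ Set.Icc (-β) β, qm a x ∈ Set.Ioo (-β) β)
    (hβder : ∀ x : ℝ, β ≤ |x| → 2 * β ≤ |deriv (qm a) x|)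
    :
    ∃ C₁ : ℝ, 0 < C₁ ∧ ∃ R₁ : ℝ, R₁ ∈ Set.Ioo (0 : ℝ) 2 ∧ ∃ n₀ : ℕ,
      ∃ α₀ > 0, ∀ α : ℝ, 0 < α → α < α₀ →
        ∀ θ x : ℝ, x ∈ Set.Icc (-β) β →
          (∀ k : ℕ, |deriv (fun y => fn a d φ α k θ y) x| ≤ C₁ * R₁ ^ k) ∧
          (∀ k : ℕ, n₀ ≤ k →
            |deriv (fun y => fn a d φ α k θ y) x| ≤ R₁ ^ k ∧ R₁ ^ k ≤ (d : ℝ) ^ k / 6) :=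
  domination_lemma_general a d hd φ hφb β hβ1 hβmap
end
end

section
/- Every T ∈ 𝒯_φ is not identically zero. More precisely, if l ∈ ℕ is large enough that C₁·R₁d^{−l}/(1 − R₁d^{−l}) ≤ 1/2, then for any T ∈ 𝒯_φ with data (a_n, k_n), choosing θ₀ ∈ [0,1) with |φ̂^{(l)}(θ₀)| = M_l := sup_{θ∈ℝ}|φ̂^{(l)}(θ)| (which is positive since φ is non-constant), one has d^{l−1}·|T^{(l−1)}(dθ₀ − k₁)| ≥ M_l/2 > 0. -/
open Set MeasureTheory Filter
open scoped ENNReal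

noncomputable section

/-! The `(l-1)`-st derivative of `T` at `dθ₀ - k₁` is `d^{-(l-1)} φ̂^{(l)}(θ₀)` plus the
term-by-term derivative of the tail. The `n`-th tail term is `φ̂'` rescaled by `d^{-(n+1)}`, so
after multiplying by `d^{l-1}` it contributes at most `C₁ M_l (R₁ d^{-l})^{n+1}`, and the choice of
`l` makes this geometric series at most `M_l / 2`. Finally `M_l > 0`: every derivative of a
periodic function vanishes somewhere (Rolle), so if `φ̂^{(j+1)} ≡ 0` then the constant `φ̂^{(j)}`
is `0`, and descending to `φ̂' ≡ 0` contradicts that `φ` is not constant. -/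

open Function
open scoped ContDiff

section SmoothSeries

variable {α 𝕜 F : Type*} [NontriviallyNormedField 𝕜] [IsRCLikeNormedField 𝕜]
  [NormedAddCommGroup F] [NormedSpace 𝕜 F] [CompleteSpace F]
  {N : ℕ∞} {f : α → 𝕜 → F} {v : ℕ → α → ℝ}

theorem iteratedDeriv_tsum_apply (hf : ∀ i, ContDiff 𝕜 N (f i))
    (hv : ∀ k : ℕ, (k : ℕ∞) ≤ N → Summable (v k))
    (h'f : ∀ (k : ℕ) (i : α) (x : 𝕜), (k : ℕ∞) ≤ N → ‖iteratedDeriv k (f i) x‖ ≤ v k i)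
    {k : ℕ} (hk : (k : ℕ∞) ≤ N) (x : 𝕜) :
    iteratedDeriv k (fun y => ∑' n, f n y) x = ∑' n, iteratedDeriv k (f n) x := by
  simp_rw [← norm_iteratedFDeriv_eq_norm_iteratedDeriv] at h'f
  have hsum : Summable fun n => iteratedFDeriv 𝕜 k (f n) x :=
    .of_norm_bounded (hv k hk) fun i => h'f k i x hk
  simp only [iteratedDeriv_eq_iteratedFDeriv, iteratedFDeriv_tsum_apply hf hv h'f hk,
    ContinuousMultilinearMap.tsum_eval hsum]

theorem contDiff_tsum_of_norm_iteratedDeriv_le (hf : ∀ i, ContDiff 𝕜 N (f i))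
    (hv : ∀ k : ℕ, (k : ℕ∞) ≤ N → Summable (v k))
    (h'f : ∀ (k : ℕ) (i : α) (x : 𝕜), (k : ℕ∞) ≤ N → ‖iteratedDeriv k (f i) x‖ ≤ v k i) :
    ContDiff 𝕜 N fun x => ∑' i, f i x :=
  contDiff_tsum hf hv (by simpa only [norm_iteratedFDeriv_eq_norm_iteratedDeriv] using h'f)

end SmoothSeries

section Affine

variable {𝕜 F : Type*} [NontriviallyNormedField 𝕜] [NormedAddCommGroup F] [NormedSpace 𝕜 F]

theorem iteratedDeriv_comp_add_div {f : 𝕜 → 𝕜} {n : ℕ} (hf : ContDiff 𝕜 n f) (c r x : 𝕜) :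
    iteratedDeriv n (fun y => f ((y + c) / r)) x = r⁻¹ ^ n * iteratedDeriv n f ((x + c) / r) := by
  simp only [div_eq_inv_mul]
  rw [iteratedDeriv_comp_add_const n (fun z => f (r⁻¹ * z)) c, iteratedDeriv_comp_const_mul hf]

theorem Function.Periodic.iteratedDeriv {f : 𝕜 → F} {c : 𝕜} (hp : Periodic f c) (n : ℕ) :
    Periodic (_root_.iteratedDeriv n f) c := fun x => by
  simpa [funext hp] using (congrFun (iteratedDeriv_comp_add_const n f c) x).symm

end Affine

namespace Function.Periodic

theorem exists_norm_iteratedDeriv_le {F : Type*} [NormedAddCommGroup F] [NormedSpace ℝ F]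
    {f : ℝ → F} {c : ℝ} (hp : Periodic f c) (hc : c ≠ 0) (hf : ContDiff ℝ ∞ f) (n : ℕ) :
    ∃ K, ∀ x, ‖_root_.iteratedDeriv n f x‖ ≤ K := by
  obtain ⟨K, hK⟩ := ((hp.iteratedDeriv n).isBounded_of_continuous hc
    (hf.continuous_iteratedDeriv n (mod_cast le_top))).exists_norm_le
  exact ⟨K, fun x => hK _ (mem_range_self x)⟩

theorem exists_deriv_eq_zero {f : ℝ → ℝ} {c : ℝ} (hp : Periodic f c) (hc : 0 < c)
    (hf : Continuous f) : ∃ x, deriv f x = 0 :=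
  let ⟨x, _, hx⟩ := _root_.exists_deriv_eq_zero hc hf.continuousOn (by simpa using (hp 0).symm)
  ⟨x, hx⟩

theorem exists_iteratedDeriv_ne_zero {f : ℝ → ℝ} {c : ℝ} (hp : Periodic f c) (hc : 0 < c)
    (hf : ContDiff ℝ ∞ f) (hnc : ∃ s t, f s ≠ f t) (n : ℕ) :
    ∃ x, _root_.iteratedDeriv (n + 1) f x ≠ 0 := by
  induction n with
  | zero =>
    by_contra! h
    obtain ⟨s, t, hst⟩ := hnc
    exact hst (is_const_of_deriv_eq_zero (hf.differentiable (by simp)) (by simpa using h) s t)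
  | succ n ih =>
    by_contra! h
    obtain ⟨x₀, hx₀⟩ := ih
    obtain ⟨x₁, hx₁⟩ := (hp.iteratedDeriv n).exists_deriv_eq_zero hc
      (hf.continuous_iteratedDeriv n (mod_cast le_top))
    rw [← iteratedDeriv_succ] at hx₁
    have hconst := is_const_of_deriv_eq_zero
      (hf.differentiable_iteratedDeriv (n + 1) (mod_cast WithTop.coe_lt_top _))
      (fun x => by rw [← iteratedDeriv_succ]; exact h x) x₀ x₁
    exact hx₀ (hconst.trans hx₁)

end Function.Periodic

section RescaledSeries

variable {ψ : ℝ → ℝ}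

theorem abs_iteratedDeriv_mul_comp_add_div_le (hψ : ContDiff ℝ ∞ ψ) {j : ℕ} {K : ℝ}
    (hK : ∀ x, |iteratedDeriv j ψ x| ≤ K) {r : ℝ} (hr : 1 ≤ |r|) (u c x : ℝ) :
    |iteratedDeriv j (fun y => u * ψ ((y + c) / r)) x| ≤ |u| * K := by
  rw [iteratedDeriv_const_mul_field, iteratedDeriv_comp_add_div (hψ.of_le (mod_cast le_top)),
    abs_mul, abs_mul, abs_pow, abs_inv]
  have hr' : (|r|⁻¹) ^ j ≤ 1 := pow_le_one₀ (by positivity) (inv_le_one_of_one_le₀ hr)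
  gcongr
  calc |r|⁻¹ ^ j * |iteratedDeriv j ψ ((x + c) / r)| ≤ 1 * K :=
        mul_le_mul hr' (hK _) (abs_nonneg _) zero_le_one
    _ = K := one_mul K

variable {u c s : ℕ → ℝ}

theorem contDiff_tsum_mul_comp_add_div (hψ : ContDiff ℝ ∞ ψ)
    (hbd : ∀ j, ∃ K, ∀ x, |iteratedDeriv j ψ x| ≤ K) (hu : Summable u) (hs : ∀ n, 1 ≤ |s n|) :
    ContDiff ℝ ∞ (fun x => ∑' n, u n * ψ ((x + c n) / s n)) := by
  choose K hK using hbd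
  exact contDiff_tsum_of_norm_iteratedDeriv_le (v := fun j n => |u n| * K j) (fun n => by fun_prop)
    (fun j _ => hu.abs.mul_right (K j))
    (fun j n x _ => abs_iteratedDeriv_mul_comp_add_div_le hψ (hK j) (hs n) (u n) (c n) x)

theorem iteratedDeriv_tsum_mul_comp_add_div (hψ : ContDiff ℝ ∞ ψ)
    (hbd : ∀ j, ∃ K, ∀ x, |iteratedDeriv j ψ x| ≤ K) (hu : Summable u) (hs : ∀ n, 1 ≤ |s n|)
    (m : ℕ) (x : ℝ) :
    iteratedDeriv m (fun y => ∑' n, u n * ψ ((y + c n) / s n)) x =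
      ∑' n, u n * ((s n)⁻¹ ^ m * iteratedDeriv m ψ ((x + c n) / s n)) := by
  choose K hK using hbd
  rw [iteratedDeriv_tsum_apply (f := fun n y => u n * ψ ((y + c n) / s n))
    (v := fun j n => |u n| * K j) (fun n => by fun_prop)
    (fun j _ => hu.abs.mul_right (K j))
    (fun j n x _ => abs_iteratedDeriv_mul_comp_add_div_le hψ (hK j) (hs n) (u n) (c n) x)
    le_top]
  simp only [iteratedDeriv_const_mul_field, iteratedDeriv_comp_add_div (hψ.of_le (mod_cast le_top))]

end RescaledSeries

theorem summable_of_abs_le_mul_pow_succ {u : ℕ → ℝ} {C ρ : ℝ} (hρ0 : 0 ≤ ρ) (hρ1 : ρ < 1)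
    (hu : ∀ n, |u n| ≤ C * ρ ^ (n + 1)) : Summable u :=
  .of_norm_bounded (((summable_nat_add_iff 1).2 (summable_geometric_of_lt_one hρ0 hρ1)).mul_left C)
    hu

theorem pow_mul_abs_iteratedDeriv_tsum_le {ψ : ℝ → ℝ} {u c : ℕ → ℝ} {D C R M : ℝ} {m : ℕ}
    (hψ : ContDiff ℝ ∞ ψ) (hbd : ∀ j, ∃ K, ∀ x, |iteratedDeriv j ψ x| ≤ K)
    (hD : 1 ≤ D) (hR : 0 ≤ R) (hRD : R < D) (hu : ∀ n, |u n| ≤ C * (R / D) ^ (n + 1))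
    (hM : ∀ x, |iteratedDeriv m ψ x| ≤ M) (x : ℝ) :
    D ^ m * |iteratedDeriv m (fun y => ∑' n, u n * ψ ((y + c n) / D ^ (n + 2))) x| ≤
      C * (R / D ^ (m + 1)) / (1 - R / D ^ (m + 1)) * M := by
  set q := R / D ^ (m + 1)
  have hD0 : 0 < D := one_pos.trans_le hD
  have hq0 : 0 ≤ q := by positivity
  have hq1 : q < 1 := (div_lt_one (by positivity)).2 (hRD.trans_le (le_self_pow₀ hD m.succ_ne_zero))
  have hsum : Summable u :=
    summable_of_abs_le_mul_pow_succ (by positivity) ((div_lt_one hD0).2 hRD) hu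
  have hterm : ∀ n, ‖D ^ m * (u n * ((D ^ (n + 2))⁻¹ ^ m *
      iteratedDeriv m ψ ((x + c n) / D ^ (n + 2))))‖ ≤ C * M * q * q ^ n := by
    intro n
    rw [Real.norm_eq_abs, abs_mul, abs_mul, abs_mul, abs_of_nonneg (by positivity : 0 ≤ D ^ m),
      abs_of_nonneg (by positivity : 0 ≤ (D ^ (n + 2))⁻¹ ^ m)]
    calc D ^ m * (|u n| * ((D ^ (n + 2))⁻¹ ^ m * |iteratedDeriv m ψ ((x + c n) / D ^ (n + 2))|))
        ≤ D ^ m * (C * (R / D) ^ (n + 1) * ((D ^ (n + 2))⁻¹ ^ m * M)) := by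
          gcongr
          · exact (abs_nonneg _).trans (hu n)
          · exact hu n
          · exact hM _
      _ = C * M * q * q ^ n := by
          simp only [q, div_pow, inv_pow, ← pow_mul]
          field_simp
          ring
  rw [iteratedDeriv_tsum_mul_comp_add_div hψ hbd hsum
    (fun n => by rw [abs_of_pos (by positivity)]; exact one_le_pow₀ hD)]
  calc D ^ m * |∑' n, u n * ((D ^ (n + 2))⁻¹ ^ m * iteratedDeriv m ψ ((x + c n) / D ^ (n + 2)))|
      = ‖∑' n, D ^ m * (u n * ((D ^ (n + 2))⁻¹ ^ m *
          iteratedDeriv m ψ ((x + c n) / D ^ (n + 2))))‖ := by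
        rw [tsum_mul_left, Real.norm_eq_abs, abs_mul, abs_of_nonneg (by positivity : 0 ≤ D ^ m)]
    _ ≤ C * M * q * (1 - q)⁻¹ :=
        tsum_of_norm_bounded ((hasSum_geometric_of_lt_one hq0 hq1).mul_left _) hterm
    _ = C * q / (1 - q) * M := by ring

theorem half_le_pow_mul_abs_iteratedDeriv_add_tsum {ψ : ℝ → ℝ} {u c : ℕ → ℝ}
    {D C R M c₀ x₀ : ℝ} {m : ℕ} (hψ : ContDiff ℝ ∞ ψ)
    (hbd : ∀ j, ∃ K, ∀ x, |iteratedDeriv j ψ x| ≤ K) (hD : 1 ≤ D) (hR : 0 ≤ R) (hRD : R < D)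
    (hu : ∀ n, |u n| ≤ C * (R / D) ^ (n + 1))
    (hCR : C * (R / D ^ (m + 1)) / (1 - R / D ^ (m + 1)) ≤ 1 / 2)
    (hM : ∀ x, |iteratedDeriv m ψ x| ≤ M) (hx₀ : |iteratedDeriv m ψ x₀| = M) :
    M / 2 ≤ D ^ m * |iteratedDeriv m
      (fun y => ψ ((y + c₀) / D) + ∑' n, u n * ψ ((y + c n) / D ^ (n + 2))) (D * x₀ - c₀)| := by
  have hD0 : 0 < D := one_pos.trans_le hD
  set S := fun y => ∑' n, u n * ψ ((y + c n) / D ^ (n + 2))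
  have hS : ContDiff ℝ ∞ S := contDiff_tsum_mul_comp_add_div hψ hbd
    (summable_of_abs_le_mul_pow_succ (by positivity) ((div_lt_one hD0).2 hRD) hu)
    (fun n => by rw [abs_of_pos (by positivity)]; exact one_le_pow₀ hD)
  have hA : ContDiff ℝ ∞ fun y => ψ ((y + c₀) / D) := by fun_prop
  have hx : (D * x₀ - c₀ + c₀) / D = x₀ := by field_simp; ring
  rw [iteratedDeriv_fun_add (hA.contDiffAt.of_le (mod_cast le_top))
    (hS.contDiffAt.of_le (mod_cast le_top)),
    iteratedDeriv_comp_add_div (hψ.of_le (mod_cast le_top)), hx]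
  have hmain : D ^ m * |D⁻¹ ^ m * iteratedDeriv m ψ x₀| = M := by
    rw [abs_mul, abs_of_nonneg (by positivity), hx₀, ← mul_assoc, ← mul_pow,
      mul_inv_cancel₀ hD0.ne', one_pow, one_mul]
  have herr := pow_mul_abs_iteratedDeriv_tsum_le (c := c) hψ hbd hD hR hRD hu hM (D * x₀ - c₀)
  have htri : |D⁻¹ ^ m * iteratedDeriv m ψ x₀| ≤
      |D⁻¹ ^ m * iteratedDeriv m ψ x₀ + iteratedDeriv m S (D * x₀ - c₀)| +
        |iteratedDeriv m S (D * x₀ - c₀)| := by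
    simpa using abs_add_le (D⁻¹ ^ m * iteratedDeriv m ψ x₀ + iteratedDeriv m S (D * x₀ - c₀))
      (-iteratedDeriv m S (D * x₀ - c₀))
  have hscaled := mul_le_mul_of_nonneg_left htri (pow_nonneg hD0.le m)
  rw [mul_add, hmain] at hscaled
  linarith [mul_le_mul_of_nonneg_right hCR (hx₀ ▸ abs_nonneg _ : 0 ≤ M)]

theorem tclass_not_identically_zero_general
    (d : ℕ) (hd : 2 ≤ d)
    (φ : ℝ → ℝ) (hφa : ∀ x : ℝ, AnalyticAt ℝ φ x) (hφp : Function.Periodic φ 1)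
    (hφnc : ∃ s t : ℝ, φ s ≠ φ t)
    (C₁ R₁ : ℝ) (hR₁ : R₁ ∈ Set.Ioo (0 : ℝ) 2)
    (l : ℕ) (hl : 1 ≤ l)
    (hlbig : C₁ * (R₁ / (d : ℝ) ^ l) / (1 - R₁ / (d : ℝ) ^ l) ≤ 1 / 2)
    (T : ℝ → ℝ) (b : ℕ → ℝ) (k : ℕ → ℕ)
    (hb : ∀ n : ℕ, 1 ≤ n → |b n| ≤ C₁ * (R₁ / d) ^ n)
    (hT : ∀ θ : ℝ, T θ = deriv φ ((θ + (k 1 : ℝ)) / d) +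
      ∑' n : ℕ, b (n + 1) * deriv φ ((θ + (k (n + 1) : ℝ)) / (d : ℝ) ^ (n + 2)))
    (M : ℝ) (hM : M = ⨆ θ : ℝ, |iteratedDeriv l φ θ|)
    (θ₀ : ℝ) (hθ₀max : |iteratedDeriv l φ θ₀| = M) :
    0 < M ∧
      M / 2 ≤ (d : ℝ) ^ (l - 1) * |iteratedDeriv (l - 1) T ((d : ℝ) * θ₀ - (k 1 : ℝ))| := by
  obtain ⟨m, rfl⟩ : ∃ m, l = m + 1 := ⟨l - 1, by omega⟩
  rw [Nat.add_sub_cancel]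
  have hφ : AnalyticOnNhd ℝ φ univ := fun x _ => hφa x
  have hbd (j : ℕ) : ∃ K, ∀ x, |iteratedDeriv j φ x| ≤ K := by
    simpa only [Real.norm_eq_abs] using hφp.exists_norm_iteratedDeriv_le one_ne_zero hφ.contDiff j
  have hle (θ : ℝ) : |iteratedDeriv (m + 1) φ θ| ≤ M := by
    obtain ⟨K, hK⟩ := hbd (m + 1)
    exact hM ▸ le_ciSup ⟨K, forall_mem_range.2 hK⟩ θ
  refine ⟨?_, ?_⟩
  · obtain ⟨x, hx⟩ := hφp.exists_iteratedDeriv_ne_zero one_pos hφ.contDiff hφnc m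
    exact (abs_pos.2 hx).trans_le (hle x)
  · have hd1 : (1 : ℝ) ≤ d := by exact_mod_cast one_le_two.trans hd
    rw [show T = _ from funext hT]
    simp only [iteratedDeriv_succ'] at hle hθ₀max
    exact half_le_pow_mul_abs_iteratedDeriv_add_tsum hφ.deriv.contDiff
      (fun j => by simpa only [← iteratedDeriv_succ'] using hbd (j + 1)) hd1 hR₁.1.le
      (hR₁.2.trans_le (by exact_mod_cast hd)) (fun n => hb (n + 1) n.succ_pos) hlbig hle hθ₀max

/-- Every `T ∈ 𝒯_φ` is not identically zero: if `l` is large enough that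
`C₁ R₁ d^{-l} / (1 - R₁ d^{-l}) ≤ 1/2`, `T ∈ 𝒯_φ` has data `(bₙ, kₙ)`, and `θ₀ ∈ [0,1)`
attains `M_l = sup_θ |φ̂^{(l)}(θ)|`, then `M_l > 0` and
`d^{l-1} |T^{(l-1)}(dθ₀ - k₁)| ≥ M_l / 2`. -/
theorem tclass_not_identically_zero
    (a : ℝ) (ha : a ∈ Set.Ioo (1 : ℝ) 2) (hpre : StrictlyPreperiodic a)
    (d : ℕ) (hd : 2 ≤ d)
    (φ : ℝ → ℝ) (hφa : ∀ x : ℝ, AnalyticAt ℝ φ x) (hφp : Function.Periodic φ 1)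
    (hφnc : ∃ s t : ℝ, φ s ≠ φ t) (hφb : ∀ θ : ℝ, |φ θ| ≤ 1)
    (C₁ R₁ : ℝ) (hC₁ : 0 < C₁) (hR₁ : R₁ ∈ Set.Ioo (0 : ℝ) 2)
    (l : ℕ) (hl : 1 ≤ l)
    (hlbig : C₁ * (R₁ / (d : ℝ) ^ l) / (1 - R₁ / (d : ℝ) ^ l) ≤ 1 / 2)
    (T : ℝ → ℝ) (b : ℕ → ℝ) (k : ℕ → ℕ)
    (hk : ∀ n : ℕ, 1 ≤ n → k n < d ^ n)
    (hb : ∀ n : ℕ, 1 ≤ n → |b n| ≤ C₁ * (R₁ / d) ^ n)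
    (hT : ∀ θ : ℝ, T θ = deriv φ ((θ + (k 1 : ℝ)) / d) +
      ∑' n : ℕ, b (n + 1) * deriv φ ((θ + (k (n + 1) : ℝ)) / (d : ℝ) ^ (n + 2)))
    (M : ℝ) (hM : M = ⨆ θ : ℝ, |iteratedDeriv l φ θ|)
    (θ₀ : ℝ) (hθ₀ : θ₀ ∈ Set.Ico (0 : ℝ) 1) (hθ₀max : |iteratedDeriv l φ θ₀| = M) :
    0 < M ∧
      M / 2 ≤ (d : ℝ) ^ (l - 1) * |iteratedDeriv (l - 1) T ((d : ℝ) * θ₀ - (k 1 : ℝ))| :=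
  tclass_not_identically_zero_general d hd φ hφa hφp hφnc C₁ R₁ hR₁ l hl hlbig T b k hb hT M hM θ₀
    hθ₀max
end
end

section
/- Let N₀ be a positive integer such that φ is not of period d^{−N₀}, and let m₀ be the minimal positive integer such that d^{N₀} does not divide m₀ and c_{m₀} ≠ 0 (where c_n are the Fourier coefficients of φ). Then for every integer N₁ ≥ N₀, the function Q_{N₁}(θ) = ∑_{k=1}^{N₁} (f^{N₁−k})'(f^k(0))·φ(d^{k−1}θ) satisfies ∫₀¹ Q_{N₁}(θ)·e^{−2πi m₀ θ} dθ = (f^{N₁−1})'(f(0))·c_{m₀} ≠ 0; in particular, Q_{N₁} is not of period d^{−N₀}. -/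
open Set MeasureTheory Filter
open scoped ENNReal

noncomputable section

/-!
Write `e_m(θ) = exp(-2πimθ)`. A function `g` of period `1` that also has period `1/D` with
`D ∤ m` has vanishing `m`-th Fourier coefficient, since translating by `1/D` multiplies that
coefficient by `e_m(1/D) ≠ 1`. Hence `θ ↦ φ(Dθ)` has Fourier coefficients only at multiples `Dn`,
where they equal `c_n`. For `k ≥ 2` the term `φ(d^{k-1}θ)` of `Q_{N₁}` thus contributes to the
`m₀`-th coefficient only through `c_n` with `n` a proper divisor of `m₀`; such `n` is not divisible
by `d^{N₀}`, so `c_n = 0` by minimality of `m₀`. Only the `k = 1` term survives, with the factor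
`(f^{N₁-1})'(f(0)) = ∏ -2 f^i(0) ≠ 0`. If `Q_{N₁}` had period `d^{-N₀}`, the first observation
would make this coefficient vanish.
-/

namespace VianaMap

open Function Finset

def fourierKernel (m : ℕ) (θ : ℝ) : ℂ := Complex.exp (-2 * Real.pi * Complex.I * m * θ)

@[fun_prop]
theorem continuous_fourierKernel (m : ℕ) : Continuous (fourierKernel m) := by
  unfold fourierKernel; fun_prop

theorem fourierKernel_add (m : ℕ) (θ s : ℝ) :
    fourierKernel m (θ + s) = fourierKernel m θ * fourierKernel m s := by
  simp only [fourierKernel, ← Complex.exp_add]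
  congr 1; push_cast; ring

theorem fourierKernel_natCast_mul (D m : ℕ) (θ : ℝ) :
    fourierKernel (D * m) θ = fourierKernel m (D * θ) := by
  simp only [fourierKernel]
  congr 1; push_cast; ring

theorem periodic_fourierKernel (m : ℕ) : Periodic (fourierKernel m) 1 := by
  intro θ
  have h_one : fourierKernel m 1 = 1 := by
    rw [fourierKernel, show -2 * (Real.pi : ℂ) * Complex.I * m * ((1 : ℝ) : ℂ) =
      ((-m : ℤ) : ℂ) * (2 * Real.pi * Complex.I) by push_cast; ring]
    exact Complex.exp_int_mul_two_pi_mul_I _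
  rw [fourierKernel_add, h_one, mul_one]

theorem fourierKernel_one_div_ne_one {D m : ℕ} (hD : 0 < D) (hm : ¬ D ∣ m) :
    fourierKernel m (1 / (D : ℝ)) ≠ 1 := by
  rw [Ne, fourierKernel, Complex.exp_eq_one_iff]
  rintro ⟨n, hn⟩
  have hD' : (D : ℂ) ≠ 0 := by exact_mod_cast hD.ne'
  have hmn : ((m : ℤ) : ℂ) = ((D * -n : ℤ) : ℂ) := by
    push_cast at hn ⊢
    field_simp at hn
    linear_combination -hn
  exact hm (Int.natCast_dvd_natCast.1 ⟨-n, by exact_mod_cast hmn⟩)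

theorem _root_.Function.Periodic.comp_natCast_mul {R α : Type*} [Semiring R] {f : R → α}
    (h : Periodic f 1) (D : ℕ) : Periodic (fun x => f (D * x)) 1 := fun x => by
  simpa [mul_add] using h.nat_mul D (D * x)

theorem _root_.Function.Periodic.intervalIntegral_comp_natCast_mul {E : Type*}
    [NormedAddCommGroup E] [NormedSpace ℝ E] {h : ℝ → E} (hp : Periodic h 1)
    (hi : IntervalIntegrable h MeasureSpace.volume 0 1) {D : ℕ} (hD : 0 < D) :
    ∫ θ in (0 : ℝ)..1, h (D * θ) = ∫ θ in (0 : ℝ)..1, h θ := by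
  have hD' : (D : ℝ) ≠ 0 := by positivity
  have hsum := hp.intervalIntegral_add_zsmul_eq D 0 (hp.intervalIntegrable₀ one_ne_zero hi)
  simp only [zero_add, natCast_zsmul, nsmul_eq_mul, mul_one] at hsum
  rw [intervalIntegral.integral_comp_mul_left h hD', mul_zero, mul_one, hsum,
    ← Nat.cast_smul_eq_nsmul ℝ, inv_smul_smul₀ hD']

theorem intervalIntegral_eq_zero_of_add_eq_mul {g : ℝ → ℂ} (hg : Periodic g 1) {s : ℝ}
    {ω : ℂ} (hω : ω ≠ 1) (hs : ∀ θ, g (θ + s) = ω * g θ) :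
    ∫ θ in (0 : ℝ)..1, g θ = 0 := by
  have hshift : ∫ θ in (0 : ℝ)..1, g (θ + s) = ∫ θ in (0 : ℝ)..1, g θ := by
    rw [intervalIntegral.integral_comp_add_right, zero_add, add_comm 1 s]
    simpa using hg.intervalIntegral_add_eq s 0
  simp only [hs, intervalIntegral.integral_const_mul] at hshift
  have h : (ω - 1) * ∫ θ in (0 : ℝ)..1, g θ = 0 := by rw [sub_mul, hshift, one_mul, sub_self]
  exact (mul_eq_zero.1 h).resolve_left (sub_ne_zero.2 hω)

theorem intervalIntegral_mul_fourierKernel_eq_zero {g : ℝ → ℂ} {D m : ℕ} (hg : Periodic g 1)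
    (hgD : Periodic g (1 / D)) (hD : 0 < D) (hm : ¬ D ∣ m) :
    ∫ θ in (0 : ℝ)..1, g θ * fourierKernel m θ = 0 :=
  intervalIntegral_eq_zero_of_add_eq_mul (s := 1 / (D : ℝ)) (hg.mul (periodic_fourierKernel m))
    (fourierKernel_one_div_ne_one hD hm) fun θ => by
      rw [hgD θ, fourierKernel_add]; ring

theorem intervalIntegral_comp_natCast_mul_mul_fourierKernel {φ : ℝ → ℂ} (hφc : Continuous φ)
    (hφp : Periodic φ 1) {D : ℕ} (hD : 0 < D) (m : ℕ) :
    ∫ θ in (0 : ℝ)..1, φ (D * θ) * fourierKernel (D * m) θ =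
      ∫ θ in (0 : ℝ)..1, φ θ * fourierKernel m θ := by
  simp only [fourierKernel_natCast_mul]
  exact (hφp.mul (periodic_fourierKernel m)).intervalIntegral_comp_natCast_mul
    ((hφc.mul (continuous_fourierKernel m)).intervalIntegrable 0 1) hD

theorem intervalIntegral_comp_natCast_mul_mul_fourierKernel_eq_zero {φ : ℝ → ℂ}
    (hφc : Continuous φ) (hφp : Periodic φ 1) {D m : ℕ} (hD : 2 ≤ D) (hm : 0 < m)
    (hvanish : ∀ n, n ∣ m → n < m → ∫ θ in (0 : ℝ)..1, φ θ * fourierKernel n θ = 0) :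
    ∫ θ in (0 : ℝ)..1, φ (D * θ) * fourierKernel m θ = 0 := by
  by_cases hDm : D ∣ m
  · obtain ⟨n, rfl⟩ := hDm
    rw [intervalIntegral_comp_natCast_mul_mul_fourierKernel hφc hφp (by omega)]
    exact hvanish n (dvd_mul_left n D) (lt_mul_left (Nat.pos_of_mul_pos_left hm) (by omega))
  · refine intervalIntegral_mul_fourierKernel_eq_zero (hφp.comp_natCast_mul D) ?_ (by omega) hDm
    simpa using hφp.const_mul (D : ℝ)

theorem intervalIntegral_sum_mul_fourierKernel {φ : ℝ → ℂ} (hφc : Continuous φ)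
    (hφp : Periodic φ 1) (A : ℕ → ℂ) {d N m : ℕ} (hd : 2 ≤ d) (hN : 1 ≤ N) (hm : 0 < m)
    (hvanish : ∀ n, n ∣ m → n < m → ∫ θ in (0 : ℝ)..1, φ θ * fourierKernel n θ = 0) :
    ∫ θ in (0 : ℝ)..1, (∑ k ∈ Icc 1 N, A k * φ ((d : ℝ) ^ (k - 1) * θ)) * fourierKernel m θ =
      A 1 * ∫ θ in (0 : ℝ)..1, φ θ * fourierKernel m θ := by
  simp only [Finset.sum_mul, mul_assoc]
  rw [intervalIntegral.integral_finsetSum fun k _ =>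
      (by fun_prop : Continuous _).intervalIntegrable 0 1,
    Finset.sum_eq_single_of_mem 1 (by simp [hN])]
  · simp
  · intro k hk hk1
    have hD : 2 ≤ d ^ (k - 1) :=
      hd.trans (Nat.le_self_pow (by simp at hk; omega) d)
    rw [intervalIntegral.integral_const_mul, ← Nat.cast_pow,
      intervalIntegral_comp_natCast_mul_mul_fourierKernel_eq_zero hφc hφp hD hm hvanish, mul_zero]

theorem _root_.Function.Periodic.sum_mul_comp_pow_mul {φ : ℝ → ℝ} (hφ : Periodic φ 1)
    (A : ℕ → ℝ) (d : ℕ) (s : Finset ℕ) :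
    Periodic (fun θ => ∑ k ∈ s, A k * φ ((d : ℝ) ^ (k - 1) * θ)) 1 := fun θ =>
  Finset.sum_congr rfl fun k _ => by
    simpa only [Nat.cast_pow] using congrArg (A k * ·) (hφ.comp_natCast_mul (d ^ (k - 1)) θ)

theorem eq_zero_of_dvd_of_lt_of_minimal {M : Type*} [Zero M] {c : ℕ → M} {P m₀ : ℕ}
    (hm₀pos : 0 < m₀) (hm₀div : ¬ P ∣ m₀) (hmin : ∀ m, 0 < m → ¬ P ∣ m → c m ≠ 0 → m₀ ≤ m)
    {n : ℕ} (hn : n ∣ m₀) (hlt : n < m₀) : c n = 0 := by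
  by_contra hcn
  exact (hmin n (Nat.pos_of_dvd_of_pos hn hm₀pos) (fun h => hm₀div (h.trans hn)) hcn).not_gt hlt

theorem deriv_iterate_eq_prod {𝕜 : Type*} [NontriviallyNormedField 𝕜] {f : 𝕜 → 𝕜}
    (hf : Differentiable 𝕜 f) (n : ℕ) (x : 𝕜) :
    deriv f^[n] x = ∏ i ∈ range n, deriv f (f^[i] x) := by
  induction n with
  | zero => simp
  | succ n ih =>
    rw [iterate_succ', deriv_comp x hf.differentiableAt (hf.iterate n).differentiableAt, ih,
      prod_range_succ, mul_comm]

theorem differentiable_qm (a : ℝ) : Differentiable ℝ (qm a) := by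
  unfold qm; fun_prop

theorem deriv_qm (a x : ℝ) : deriv (qm a) x = -2 * x := by
  unfold qm
  rw [deriv_const_sub, deriv_pow_field]
  ring

theorem deriv_iterate_qm_ne_zero {a : ℝ} (ha : ∀ i : ℕ, 1 ≤ i → (qm a)^[i] 0 ≠ 0) (n : ℕ) :
    deriv (qm a)^[n] (qm a 0) ≠ 0 := by
  rw [deriv_iterate_eq_prod (differentiable_qm a), prod_ne_zero_iff]
  intro i _
  rw [deriv_qm, ← iterate_succ_apply]
  exact mul_ne_zero (by norm_num) (ha (i + 1) (by omega))

end VianaMap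

theorem Q_not_periodic_general
    (a : ℝ) (hpre : StrictlyPreperiodic a)
    (d : ℕ) (hd : 2 ≤ d)
    (φ : ℝ → ℝ) (hφa : ∀ x : ℝ, AnalyticAt ℝ φ x) (hφp : Function.Periodic φ 1)
    (N₀ : ℕ) (hN₀ : 1 ≤ N₀)
    (c : ℕ → ℂ)
    (hc : ∀ m : ℕ, c m =
      ∫ θ in (0 : ℝ)..1, (φ θ : ℂ) * Complex.exp (-2 * Real.pi * Complex.I * m * θ))
    (m₀ : ℕ) (hm₀pos : 0 < m₀) (hm₀div : ¬ d ^ N₀ ∣ m₀) (hm₀c : c m₀ ≠ 0)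
    (hm₀min : ∀ m : ℕ, 0 < m → ¬ d ^ N₀ ∣ m → c m ≠ 0 → m₀ ≤ m) :
    ∀ N₁ : ℕ, N₀ ≤ N₁ →
      (∫ θ in (0 : ℝ)..1,
          ((∑ k ∈ Finset.Icc 1 N₁,
              deriv ((qm a)^[N₁ - k]) ((qm a)^[k] 0) * φ ((d : ℝ) ^ (k - 1) * θ) : ℝ) : ℂ) *
            Complex.exp (-2 * Real.pi * Complex.I * m₀ * θ)) =
        (Complex.ofReal (deriv ((qm a)^[N₁ - 1]) (qm a 0))) * c m₀ ∧
      (Complex.ofReal (deriv ((qm a)^[N₁ - 1]) (qm a 0))) * c m₀ ≠ 0 ∧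
      ¬ Function.Periodic
          (fun θ : ℝ => ∑ k ∈ Finset.Icc 1 N₁,
            deriv ((qm a)^[N₁ - k]) ((qm a)^[k] 0) * φ ((d : ℝ) ^ (k - 1) * θ))
          (1 / (d : ℝ) ^ N₀) := by
  intro N₁ hN₁
  have hφc : Continuous φ := continuous_iff_continuousAt.2 fun x => (hφa x).continuousAt
  have hcoeff : (∫ θ in (0 : ℝ)..1,
      ((∑ k ∈ Finset.Icc 1 N₁,
          deriv ((qm a)^[N₁ - k]) ((qm a)^[k] 0) * φ ((d : ℝ) ^ (k - 1) * θ) : ℝ) : ℂ) *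
        Complex.exp (-2 * Real.pi * Complex.I * m₀ * θ)) =
      (Complex.ofReal (deriv ((qm a)^[N₁ - 1]) (qm a 0))) * c m₀ := by
    push_cast
    rw [hc]
    exact VianaMap.intervalIntegral_sum_mul_fourierKernel (Complex.continuous_ofReal.comp hφc)
      (hφp.comp _) _ hd (hN₀.trans hN₁) hm₀pos fun n hn hlt =>
        (hc n).symm.trans (VianaMap.eq_zero_of_dvd_of_lt_of_minimal hm₀pos hm₀div hm₀min hn hlt)
  have hne := mul_ne_zero
    (Complex.ofReal_ne_zero.2 (VianaMap.deriv_iterate_qm_ne_zero hpre.1 (N₁ - 1))) hm₀c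
  refine ⟨hcoeff, hne, fun hper => hne ?_⟩
  rw [← hcoeff]
  exact VianaMap.intervalIntegral_mul_fourierKernel_eq_zero
    (fun θ => congrArg Complex.ofReal (hφp.sum_mul_comp_pow_mul _ d _ θ))
    (fun θ => by simpa only [Nat.cast_pow] using congrArg Complex.ofReal (hper θ))
    (by positivity) hm₀div

/-- Let `N₀ ≥ 1` be such that `φ` is not of period `d^{-N₀}`, and let `m₀` be
the minimal positive integer such that `d^{N₀} ∤ m₀` and the Fourier coefficient
`c_{m₀} = ∫₀¹ φ(θ) e^{-2πi m₀ θ} dθ` is nonzero. Then for every `N₁ ≥ N₀`, the function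
`Q_{N₁}(θ) = ∑_{k=1}^{N₁} (f^{N₁-k})'(f^k(0)) φ(d^{k-1}θ)` satisfies
`∫₀¹ Q_{N₁}(θ) e^{-2πi m₀ θ} dθ = (f^{N₁-1})'(f(0)) · c_{m₀} ≠ 0`; in particular `Q_{N₁}` is
not of period `d^{-N₀}`. -/
theorem Q_not_periodic
    (a : ℝ) (ha : a ∈ Set.Ioo (1 : ℝ) 2) (hpre : StrictlyPreperiodic a)
    (d : ℕ) (hd : 2 ≤ d)
    (φ : ℝ → ℝ) (hφa : ∀ x : ℝ, AnalyticAt ℝ φ x) (hφp : Function.Periodic φ 1)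
    (hφnc : ∃ s t : ℝ, φ s ≠ φ t) (hφb : ∀ θ : ℝ, |φ θ| ≤ 1)
    (N₀ : ℕ) (hN₀ : 1 ≤ N₀)
    (hφnp : ¬ Function.Periodic φ (1 / (d : ℝ) ^ N₀))
    (c : ℕ → ℂ)
    (hc : ∀ m : ℕ, c m =
      ∫ θ in (0 : ℝ)..1, (φ θ : ℂ) * Complex.exp (-2 * Real.pi * Complex.I * m * θ))
    (m₀ : ℕ) (hm₀pos : 0 < m₀) (hm₀div : ¬ d ^ N₀ ∣ m₀) (hm₀c : c m₀ ≠ 0)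
    (hm₀min : ∀ m : ℕ, 0 < m → ¬ d ^ N₀ ∣ m → c m ≠ 0 → m₀ ≤ m) :
    ∀ N₁ : ℕ, N₀ ≤ N₁ →
      (∫ θ in (0 : ℝ)..1,
          ((∑ k ∈ Finset.Icc 1 N₁,
              deriv ((qm a)^[N₁ - k]) ((qm a)^[k] 0) * φ ((d : ℝ) ^ (k - 1) * θ) : ℝ) : ℂ) *
            Complex.exp (-2 * Real.pi * Complex.I * m₀ * θ)) =
        (Complex.ofReal (deriv ((qm a)^[N₁ - 1]) (qm a 0))) * c m₀ ∧
      (Complex.ofReal (deriv ((qm a)^[N₁ - 1]) (qm a 0))) * c m₀ ≠ 0 ∧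
      ¬ Function.Periodic
          (fun θ : ℝ => ∑ k ∈ Finset.Icc 1 N₁,
            deriv ((qm a)^[N₁ - k]) ((qm a)^[k] 0) * φ ((d : ℝ) ^ (k - 1) * θ))
          (1 / (d : ℝ) ^ N₀) :=
  Q_not_periodic_general a hpre d hd φ hφa hφp N₀ hN₀ c hc m₀ hm₀pos hm₀div hm₀c hm₀min
end
end
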